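/- arXiv:2112.01773 — 6 statements merged into one kernel-verified Lean document; each statement's English description precedes it below -/
import Mathlib

section
/- Let E = EuclideanSpace ℝ (Fin n). Let ξ : E → ℝ be continuous with ξ(v) ≥ a for all v ∈ E, for some constant a > 0, and let κ > 0 be a constant. Suppose ε : ℝ → E is differentiable on [0,∞) and satisfies the AZTND error dynamics ε'(t) = -ξ(ε(t)) • ε(t) - κ • ∫₀ᵗ ε(s) ds for all t ≥ 0. Then ε(t) tends to 0 as t → ∞. -/
/-!
Along a solution, `U t = ‖ε t‖² + κ ‖∫₀ᵗ ε‖² + 2a ∫₀ᵗ ‖ε‖²` is nonincreasing: the cross terms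
`∓ 2κ ⟪ε, ∫₀ᵗ ε⟫` cancel and `U' = 2 (a - ξ(ε)) ‖ε‖² ≤ 0`. Hence `ε` and `κ ∫₀ᵗ ε` stay bounded
and `‖ε‖²` is integrable on `[0, ∞)`. The trajectory lies in a compact ball, on which `ξ` is
bounded, so `ε'` is bounded and `‖ε‖²` is uniformly continuous; Barbalat's lemma then gives
`‖ε‖² → 0`.
-/

open MeasureTheory intervalIntegral Filter Set Topology RealInnerProductSpace

theorem hasDerivWithinAt_integral_Ici {E : Type*} [NormedAddCommGroup E] [NormedSpace ℝ E]
    [CompleteSpace E] {f : ℝ → E} {a t : ℝ} (hf : ContinuousOn f (Ici a)) (ht : a ≤ t) :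
    HasDerivWithinAt (fun u => ∫ x in a..u, f x) (f t) (Ici a) t := by
  rcases ht.eq_or_lt with rfl | ht
  · exact integral_hasDerivWithinAt_right (by simp)
      ((hf.mono Ioi_subset_Ici_self).stronglyMeasurableAtFilter_nhdsWithin measurableSet_Ioi a)
      ((hf a self_mem_Ici).mono Ioi_subset_Ici_self)
  · refine (integral_hasDerivAt_right ?_ ?_ (hf.continuousAt (Ici_mem_nhds ht))).hasDerivWithinAt
    · exact (hf.mono (by simp [uIcc_of_le ht.le, Icc_subset_Ici_self])).intervalIntegrable
    · exact (hf.mono Ioi_subset_Ici_self).stronglyMeasurableAtFilter isOpen_Ioi t ht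

theorem tendsto_zero_of_uniformContinuousOn_of_tendsto_integral {E : Type*}
    [NormedAddCommGroup E] [NormedSpace ℝ E] [CompleteSpace E] {f : ℝ → E} {a : ℝ} {l : E}
    (hf : UniformContinuousOn f (Ici a))
    (hF : Tendsto (fun t => ∫ s in a..t, f s) atTop (𝓝 l)) :
    Tendsto f atTop (𝓝 0) := by
  have hfi : ∀ u v, a ≤ u → a ≤ v → IntervalIntegrable f volume u v := fun u v hu hv =>
    (hf.continuousOn.mono fun x hx => le_trans (le_min hu hv) hx.1).intervalIntegrable
  rw [Metric.tendsto_atTop]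
  intro δ hδ
  obtain ⟨r, hr, hfr⟩ := Metric.uniformContinuousOn_iff.1 hf (δ / 2) (half_pos hδ)
  -- `∫ s in t..t + r / 2, f s` tends to `0` and is within `(r / 2) * (δ / 2)` of `(r / 2) • f t`.
  have hwindow : Tendsto (fun t => ∫ s in t..t + r / 2, f s) atTop (𝓝 0) := by
    have := (hF.comp (tendsto_atTop_add_const_right atTop (r / 2) tendsto_id)).sub hF
    rw [sub_self] at this
    refine this.congr' ?_
    filter_upwards [eventually_ge_atTop a] with t ht
    exact integral_interval_sub_left (hfi a _ le_rfl (show a ≤ t + r / 2 by linarith)) (hfi a t le_rfl ht)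
  obtain ⟨N, hN⟩ := Metric.tendsto_atTop.1 hwindow (r / 2 * (δ / 2)) (by positivity)
  refine ⟨max a N, fun t ht => ?_⟩
  have hta : a ≤ t := le_of_max_le_left ht
  have hosc : ‖∫ s in t..t + r / 2, (f s - f t)‖ ≤ δ / 2 * (r / 2) := by
    refine (intervalIntegral.norm_integral_le_of_norm_le_const fun x hx => ?_).trans_eq (by
      rw [add_sub_cancel_left, abs_of_pos (half_pos hr)])
    rw [uIoc_of_le (by linarith)] at hx
    rw [← dist_eq_norm]
    refine (hfr x (hta.trans hx.1.le) t hta ?_).le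
    rw [Real.dist_eq, abs_of_pos (by linarith [hx.1])]
    linarith [hx.2]
  rw [integral_sub (hfi _ _ hta (by linarith)) intervalIntegrable_const,
    intervalIntegral.integral_const, add_sub_cancel_left] at hosc
  have hmean := hN t (le_of_max_le_right ht)
  rw [dist_zero_right] at hmean ⊢
  have hscaled : r / 2 * ‖f t‖ < r / 2 * δ := by
    calc r / 2 * ‖f t‖ = ‖(r / 2) • f t‖ := by rw [norm_smul, Real.norm_of_nonneg (by positivity)]
      _ ≤ ‖∫ s in t..t + r / 2, f s‖ + ‖(∫ s in t..t + r / 2, f s) - (r / 2) • f t‖ := by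
        rw [norm_sub_rev]; exact norm_le_insert' _ _
      _ < r / 2 * δ := by linarith
  exact lt_of_mul_lt_mul_left hscaled (by positivity)

variable {E : Type*} [NormedAddCommGroup E] [InnerProductSpace ℝ E]

def AZTNDErrorDynamics (ξ : E → ℝ) (κ : ℝ) (ε : ℝ → E) : Prop :=
  ∀ t : ℝ, 0 ≤ t → HasDerivAt ε (-(ξ (ε t)) • ε t - κ • ∫ s in (0:ℝ)..t, ε s) t

namespace AZTNDErrorDynamics

variable {ξ : E → ℝ} {κ a : ℝ} {ε : ℝ → E}

theorem continuousOn (h : AZTNDErrorDynamics ξ κ ε) : ContinuousOn ε (Ici 0) :=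
  fun t ht => (h t ht).continuousAt.continuousWithinAt

theorem energy_le [CompleteSpace E] (h : AZTNDErrorDynamics ξ κ ε) (hξ : ∀ v, a ≤ ξ v) {t : ℝ}
    (ht : 0 ≤ t) :
    ‖ε t‖ ^ 2 + κ * ‖∫ s in (0:ℝ)..t, ε s‖ ^ 2 + 2 * a * ∫ s in (0:ℝ)..t, ‖ε s‖ ^ 2 ≤
      ‖ε 0‖ ^ 2 := by
  set U : ℝ → ℝ := fun t =>
    ‖ε t‖ ^ 2 + κ * ‖∫ s in (0:ℝ)..t, ε s‖ ^ 2 + 2 * a * ∫ s in (0:ℝ)..t, ‖ε s‖ ^ 2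
  have hU : ∀ t ∈ Ici (0:ℝ), HasDerivWithinAt U (2 * (a - ξ (ε t)) * ‖ε t‖ ^ 2) (Ici 0) t := by
    intro t ht
    have hε := (h t ht).hasDerivWithinAt.norm_sq (s := Ici 0)
    have hy := ((hasDerivWithinAt_integral_Ici h.continuousOn ht).norm_sq).const_mul κ
    have hg := (hasDerivWithinAt_integral_Ici (f := fun s => ‖ε s‖ ^ 2)
      (h.continuousOn.norm.pow 2) ht).const_mul (2 * a)
    refine ((hε.add hy).add hg).congr_deriv ?_
    simp only [inner_sub_right, inner_smul_right, real_inner_self_eq_norm_sq,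
      real_inner_comm (ε t)]
    ring
  have hanti : AntitoneOn U (Ici 0) := by
    refine antitoneOn_of_hasDerivWithinAt_nonpos (f' := fun t => 2 * (a - ξ (ε t)) * ‖ε t‖ ^ 2)
      (convex_Ici 0)
      (fun t ht => (hU t ht).continuousWithinAt) (fun t ht => ?_) (fun t _ => ?_)
    · rw [interior_Ici] at ht ⊢
      exact (hU t (Ioi_subset_Ici_self ht)).mono Ioi_subset_Ici_self
    · exact mul_nonpos_of_nonpos_of_nonneg
        (mul_nonpos_of_nonneg_of_nonpos zero_le_two (sub_nonpos.2 (hξ _))) (sq_nonneg _)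
  simpa [U] using hanti self_mem_Ici ht ht

theorem norm_sq_add_le [CompleteSpace E] (h : AZTNDErrorDynamics ξ κ ε) (ha : 0 ≤ a)
    (hξ : ∀ v, a ≤ ξ v) {t : ℝ} (ht : 0 ≤ t) :
    ‖ε t‖ ^ 2 + κ * ‖∫ s in (0:ℝ)..t, ε s‖ ^ 2 ≤ ‖ε 0‖ ^ 2 := by
  have : 0 ≤ ∫ s in (0:ℝ)..t, ‖ε s‖ ^ 2 := integral_nonneg ht fun s _ => sq_nonneg _
  nlinarith [h.energy_le hξ ht]

theorem norm_le [CompleteSpace E] (h : AZTNDErrorDynamics ξ κ ε) (hκ : 0 ≤ κ) (ha : 0 ≤ a)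
    (hξ : ∀ v, a ≤ ξ v) {t : ℝ} (ht : 0 ≤ t) : ‖ε t‖ ≤ ‖ε 0‖ :=
  (sq_le_sq₀ (norm_nonneg _) (norm_nonneg _)).1 <| by
    nlinarith [h.norm_sq_add_le ha hξ ht, mul_nonneg hκ (sq_nonneg ‖∫ s in (0:ℝ)..t, ε s‖)]

theorem norm_smul_integral_le [CompleteSpace E] (h : AZTNDErrorDynamics ξ κ ε) (hκ : 0 ≤ κ)
    (ha : 0 ≤ a) (hξ : ∀ v, a ≤ ξ v) {t : ℝ} (ht : 0 ≤ t) :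
    ‖κ • ∫ s in (0:ℝ)..t, ε s‖ ≤ √κ * ‖ε 0‖ := by
  refine (sq_le_sq₀ (norm_nonneg _) (by positivity)).1 ?_
  rw [norm_smul, Real.norm_of_nonneg hκ, mul_pow, mul_pow, Real.sq_sqrt hκ, sq κ, mul_assoc]
  exact mul_le_mul_of_nonneg_left (by nlinarith [h.norm_sq_add_le ha hξ ht, sq_nonneg ‖ε t‖]) hκ

theorem integral_norm_sq_le [CompleteSpace E] (h : AZTNDErrorDynamics ξ κ ε) (hκ : 0 ≤ κ)
    (ha : 0 < a) (hξ : ∀ v, a ≤ ξ v) {t : ℝ} (ht : 0 ≤ t) :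
    ∫ s in (0:ℝ)..t, ‖ε s‖ ^ 2 ≤ ‖ε 0‖ ^ 2 / (2 * a) := by
  have := h.energy_le hξ ht
  have := mul_nonneg hκ (sq_nonneg ‖∫ s in (0:ℝ)..t, ε s‖)
  rw [le_div_iff₀ (by positivity)]
  nlinarith [sq_nonneg ‖ε t‖]

theorem exists_norm_deriv_le [ProperSpace E] (h : AZTNDErrorDynamics ξ κ ε) (hκ : 0 ≤ κ)
    (ha : 0 ≤ a) (hξ : ∀ v, a ≤ ξ v) (hξc : Continuous ξ) :
    ∃ D, ∀ t, 0 ≤ t → ‖-(ξ (ε t)) • ε t - κ • ∫ s in (0:ℝ)..t, ε s‖ ≤ D := by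
  obtain ⟨M, hM⟩ := (isCompact_closedBall 0 ‖ε 0‖).exists_bound_of_continuousOn hξc.continuousOn
  have hball : ∀ t, 0 ≤ t → ε t ∈ Metric.closedBall 0 ‖ε 0‖ := fun t ht => by
    simpa using h.norm_le hκ ha hξ ht
  refine ⟨M * ‖ε 0‖ + √κ * ‖ε 0‖, fun t ht => (norm_sub_le _ _).trans (add_le_add ?_
    (h.norm_smul_integral_le hκ ha hξ ht))⟩
  rw [norm_smul, norm_neg]
  exact mul_le_mul (hM _ (hball t ht)) (h.norm_le hκ ha hξ ht) (norm_nonneg _)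
    ((norm_nonneg _).trans (hM _ (hball t ht)))

theorem uniformContinuousOn_norm_sq [ProperSpace E] (h : AZTNDErrorDynamics ξ κ ε)
    (hκ : 0 ≤ κ) (ha : 0 ≤ a) (hξ : ∀ v, a ≤ ξ v) (hξc : Continuous ξ) :
    UniformContinuousOn (fun t => ‖ε t‖ ^ 2) (Ici 0) := by
  obtain ⟨D, hD⟩ := h.exists_norm_deriv_le hκ ha hξ hξc
  refine LipschitzOnWith.uniformContinuousOn (K := (2 * (‖ε 0‖ * D)).toNNReal) <|
    (convex_Ici 0).lipschitzOnWith_of_nnnorm_hasDerivWithin_le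
      (fun t ht => (h t ht).hasDerivWithinAt.norm_sq) fun t ht => ?_
  rw [← norm_toNNReal]
  refine Real.toNNReal_le_toNNReal ?_
  rw [norm_mul, Real.norm_two]
  exact mul_le_mul_of_nonneg_left ((norm_inner_le_norm _ _).trans
    (mul_le_mul (h.norm_le hκ ha hξ ht) (hD t ht) (norm_nonneg _) (norm_nonneg _))) zero_le_two

theorem integrableOn_norm_sq [CompleteSpace E] (h : AZTNDErrorDynamics ξ κ ε) (hκ : 0 ≤ κ)
    (ha : 0 < a) (hξ : ∀ v, a ≤ ξ v) : IntegrableOn (fun t => ‖ε t‖ ^ 2) (Ioi 0) := by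
  refine integrableOn_Ioi_of_intervalIntegral_norm_bounded (‖ε 0‖ ^ 2 / (2 * a)) 0
    (fun t => ?_) tendsto_id ?_
  · exact ((h.continuousOn.norm.pow 2).mono Icc_subset_Ici_self).integrableOn_Icc.mono_set
      Ioc_subset_Icc_self
  · filter_upwards [eventually_ge_atTop 0] with t ht
    simpa only [id, norm_pow, norm_norm] using h.integral_norm_sq_le hκ ha hξ ht

end AZTNDErrorDynamics

/-- **Theorem 1 (AZTND global convergence, vector case with constant feedback
coefficient).** If `ξ : EuclideanSpace ℝ (Fin n) → ℝ` is continuous and bounded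
below by a constant `a > 0`, `κ > 0`, and `ε : ℝ → EuclideanSpace ℝ (Fin n)`
is differentiable on `[0, ∞)` satisfying the AZTND error dynamics
`ε'(t) = -ξ(ε(t)) • ε(t) - κ • ∫₀ᵗ ε(s) ds` for all `t ≥ 0`, then
`ε(t) → 0` as `t → ∞`. -/
theorem aztnd_global_convergence_vector
    (n : ℕ) (a : ℝ) (ha : 0 < a)
    (ξ : EuclideanSpace ℝ (Fin n) → ℝ) (hξc : Continuous ξ)
    (hξa : ∀ v : EuclideanSpace ℝ (Fin n), a ≤ ξ v)
    (κ : ℝ) (hκ : 0 < κ)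
    (ε : ℝ → EuclideanSpace ℝ (Fin n))
    (hdyn : ∀ t : ℝ, 0 ≤ t →
      HasDerivAt ε (-(ξ (ε t)) • ε t - κ • ∫ s in (0:ℝ)..t, ε s) t) :
    Tendsto ε atTop (nhds 0) := by
  have h : AZTNDErrorDynamics ξ κ ε := hdyn
  have hsq : Tendsto (fun t => ‖ε t‖ ^ 2) atTop (𝓝 0) :=
    tendsto_zero_of_uniformContinuousOn_of_tendsto_integral
      (h.uniformContinuousOn_norm_sq hκ.le ha.le hξa hξc)
      (intervalIntegral_tendsto_integral_Ioi 0 (h.integrableOn_norm_sq hκ.le ha hξa) tendsto_id)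
  rw [tendsto_zero_iff_norm_tendsto_zero]
  simpa using hsq.sqrt
end

section
/- Let ξ : ℝ → ℝ satisfy ξ(x) ≥ 0 for all x, let κ > 0 be a constant, and suppose ε : ℝ → ℝ is differentiable on [0,∞), continuous, and satisfies ε'(t) = -ξ(ε(t))·ε(t) - κ·∫₀ᵗ ε(s) ds for all t ≥ 0. Then the Lyapunov function y(t) = (ε(t)² + κ·(∫₀ᵗ ε(s) ds)²)/2 is nonincreasing on [0,∞): for all 0 ≤ t₁ ≤ t₂, y(t₂) ≤ y(t₁). -/
open MeasureTheory intervalIntegral Filter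

/-- **Monotone decrease of the Lyapunov function**: along any solution of the
AZTND scalar error dynamics `ε'(t) = -ξ(ε(t))·ε(t) - κ·∫₀ᵗ ε(s) ds` with
`ξ ≥ 0` and constant feedback coefficient `κ > 0`, the Lyapunov function
`y(t) = (ε(t)² + κ·(∫₀ᵗ ε(s) ds)²)/2` is nonincreasing on `[0, ∞)`. -/
theorem aztnd_lyapunov_nonincreasing
    (ξ : ℝ → ℝ) (hξ : ∀ x : ℝ, 0 ≤ ξ x) (κ : ℝ) (hκ : 0 < κ)
    (ε : ℝ → ℝ) (hεc : Continuous ε)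
    (hdyn : ∀ t : ℝ, 0 ≤ t →
      HasDerivAt ε (-(ξ (ε t)) * ε t - κ * ∫ s in (0:ℝ)..t, ε s) t)
    (y : ℝ → ℝ)
    (hy : ∀ t : ℝ, y t = ((ε t) ^ 2 + κ * (∫ s in (0:ℝ)..t, ε s) ^ 2) / 2) :
    ∀ t₁ t₂ : ℝ, 0 ≤ t₁ → t₁ ≤ t₂ → y t₂ ≤ y t₁ := by
  set E : ℝ → ℝ := fun t => ∫ s in (0:ℝ)..t, ε s with hEdef
  have hEd : ∀ t : ℝ, HasDerivAt E (ε t) t := fun t =>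
    (hεc.integral_hasStrictDerivAt 0 t).hasDerivAt
  have hyfun : y = fun t => ((ε t) ^ 2 + κ * (E t) ^ 2) / 2 := funext hy
  have hyd : ∀ t : ℝ, 0 ≤ t → HasDerivAt y (-(ξ (ε t)) * (ε t) ^ 2) t := by
    intro t ht
    have h1 : HasDerivAt (fun t => ((ε t) ^ 2 + κ * (E t) ^ 2) / 2)
        ((2 * ε t ^ 1 * (-(ξ (ε t)) * ε t - κ * E t) + κ * (2 * E t ^ 1 * ε t)) / 2) t :=
      (((hdyn t ht).pow 2).add (((hEd t).pow 2).const_mul κ)).div_const 2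
    rw [hyfun]
    convert h1 using 1
    ring
  have hyc : Continuous y := by
    rw [hyfun]
    exact ((hεc.pow 2).add ((continuous_const.mul
      ((continuous_iff_continuousAt.2 fun t => (hEd t).continuousAt).pow 2)))).div_const 2
  intro t₁ t₂ h1 h12
  have := antitoneOn_of_deriv_nonpos (convex_Ici (0:ℝ)) hyc.continuousOn
    (fun x hx => by
      rw [interior_Ici] at hx
      exact (hyd x hx.le).differentiableAt.differentiableWithinAt)
    (fun x hx => by
      rw [interior_Ici] at hx
      rw [(hyd x hx.le).deriv]
      have : 0 ≤ ξ (ε x) * (ε x) ^ 2 := mul_nonneg (hξ _) (sq_nonneg _)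
      nlinarith)
  exact this h1 (le_trans h1 h12) h12
end

section
/- Let ξ : ℝ → ℝ satisfy ξ(x) ≥ 0 for all x, let κ > 0 be a constant, and suppose ε : ℝ → ℝ is differentiable on [0,∞), continuous, and satisfies ε'(t) = -ξ(ε(t))·ε(t) - κ·∫₀ᵗ ε(s) ds for all t ≥ 0. Then for all t ≥ 0, ε(t)² ≤ ε(0)² and κ·(∫₀ᵗ ε(s) ds)² ≤ ε(0)²; in particular |ε(t)| ≤ |ε(0)| and |∫₀ᵗ ε(s) ds| ≤ |ε(0)|/√κ, so both the error signal and its running integral are uniformly bounded. -/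
open MeasureTheory intervalIntegral Filter

/-- **A priori bounds from the Lyapunov decrease**: along any solution of the
AZTND scalar error dynamics `ε'(t) = -ξ(ε(t))·ε(t) - κ·∫₀ᵗ ε(s) ds` with
`ξ ≥ 0` and constant feedback coefficient `κ > 0`, one has, for all `t ≥ 0`,
`ε(t)² ≤ ε(0)²` and `κ·(∫₀ᵗ ε(s) ds)² ≤ ε(0)²`; in particular
`|ε(t)| ≤ |ε(0)|` and `|∫₀ᵗ ε(s) ds| ≤ |ε(0)|/√κ`. -/
theorem aztnd_apriori_bounds
    (ξ : ℝ → ℝ) (hξ : ∀ x : ℝ, 0 ≤ ξ x) (κ : ℝ) (hκ : 0 < κ)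
    (ε : ℝ → ℝ) (hεc : Continuous ε)
    (hdyn : ∀ t : ℝ, 0 ≤ t →
      HasDerivAt ε (-(ξ (ε t)) * ε t - κ * ∫ s in (0:ℝ)..t, ε s) t) :
    ∀ t : ℝ, 0 ≤ t →
      (ε t) ^ 2 ≤ (ε 0) ^ 2 ∧
      κ * (∫ s in (0:ℝ)..t, ε s) ^ 2 ≤ (ε 0) ^ 2 ∧
      |ε t| ≤ |ε 0| ∧
      |∫ s in (0:ℝ)..t, ε s| ≤ |ε 0| / Real.sqrt κ := by
  set I : ℝ → ℝ := fun t => ∫ s in (0:ℝ)..t, ε s with hI_def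
  have hI : ∀ t : ℝ, HasDerivAt I (ε t) t := fun t =>
    intervalIntegral.integral_hasDerivAt_right (hεc.intervalIntegrable 0 t)
      (hεc.stronglyMeasurableAtFilter _ _) hεc.continuousAt
  set y : ℝ → ℝ := fun t => ε t ^ 2 + κ * I t ^ 2 with hy_def
  have hy : ∀ t : ℝ, 0 ≤ t →
      HasDerivAt y (2 * ε t ^ 1 * (-(ξ (ε t)) * ε t - κ * I t)
        + κ * (2 * I t ^ 1 * ε t)) t := by
    intro t ht
    exact ((hdyn t ht).pow 2).add (((hI t).pow 2).const_mul κ)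
  have hanti : AntitoneOn y (Set.Ici (0:ℝ)) := by
    apply antitoneOn_of_deriv_nonpos (convex_Ici 0)
    · exact fun t ht => ((hy t ht).continuousAt.continuousWithinAt)
    · intro t ht
      rw [interior_Ici] at ht
      exact ((hy t (le_of_lt ht)).differentiableAt).differentiableWithinAt
    · intro t ht
      rw [interior_Ici] at ht
      rw [(hy t (le_of_lt ht)).deriv]
      nlinarith [hξ (ε t), sq_nonneg (ε t)]
  intro t ht
  have hyle : y t ≤ y 0 := hanti Set.self_mem_Ici ht ht
  have hI0 : I 0 = 0 := by simp [hI_def]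
  have hy0 : y 0 = ε 0 ^ 2 := by simp [hy_def, hI0]
  have h1 : ε t ^ 2 ≤ ε 0 ^ 2 := by
    have : κ * I t ^ 2 ≥ 0 := mul_nonneg hκ.le (sq_nonneg _)
    have := hyle; rw [hy0] at this; simp only [hy_def] at this; nlinarith
  have h2 : κ * I t ^ 2 ≤ ε 0 ^ 2 := by
    have := hyle; rw [hy0] at this; simp only [hy_def] at this
    nlinarith [sq_nonneg (ε t)]
  refine ⟨h1, h2, ?_, ?_⟩
  · calc |ε t| = Real.sqrt (ε t ^ 2) := (Real.sqrt_sq_eq_abs _).symm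
      _ ≤ Real.sqrt (ε 0 ^ 2) := Real.sqrt_le_sqrt h1
      _ = |ε 0| := Real.sqrt_sq_eq_abs _
  · have hsκ : 0 < Real.sqrt κ := Real.sqrt_pos.mpr hκ
    rw [le_div_iff₀ hsκ]
    calc |I t| * Real.sqrt κ = Real.sqrt (I t ^ 2) * Real.sqrt κ := by
          rw [Real.sqrt_sq_eq_abs]
      _ = Real.sqrt (κ * I t ^ 2) := by
          rw [← Real.sqrt_mul (sq_nonneg _), mul_comm]
      _ ≤ Real.sqrt (ε 0 ^ 2) := Real.sqrt_le_sqrt h2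
      _ = |ε 0| := Real.sqrt_sq_eq_abs _
end

section
/- Let a > 0, let ξ : ℝ → ℝ satisfy ξ(x) ≥ a for all x, let κ > 0 be a constant, and suppose ε : ℝ → ℝ is differentiable on [0,∞), continuous, and satisfies ε'(t) = -ξ(ε(t))·ε(t) - κ·∫₀ᵗ ε(s) ds for all t ≥ 0. Then for every T ≥ 0, ∫₀ᵀ ε(s)² ds ≤ ε(0)²/(2a); in particular the function s ↦ ε(s)² is integrable on [0,∞). -/
open MeasureTheory intervalIntegral Filter

/-! Along the dynamics the energy `y = (ε² + κ (∫₀ᵗ ε)²) / 2` satisfies `y' = -ξ(ε) ε² ≤ -a ε²`: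
the memory term `-κ ε ∫₀ᵗ ε` in `(ε²/2)'` cancels against `(κ (∫₀ᵗ ε)² / 2)'`. Integrating,
`a ∫₀ᵀ ε² ≤ y(0) - y(T) ≤ ε(0)² / 2`, a bound uniform in `T`, which gives integrability on
`[0, ∞)` because `ε² ≥ 0`. -/

theorem integrableOn_Ici_of_intervalIntegral_le {f : ℝ → ℝ} {a C : ℝ}
    (hf : LocallyIntegrable f) (hf0 : ∀ x, a ≤ x → 0 ≤ f x)
    (hC : ∀ T, a ≤ T → ∫ x in a..T, f x ≤ C) : IntegrableOn f (Set.Ici a) := by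
  rw [integrableOn_Ici_iff_integrableOn_Ioi]
  refine integrableOn_Ioi_of_intervalIntegral_norm_bounded C a
    (fun n : ℕ => (hf.integrableOn_isCompact isCompact_Icc).mono_set Set.Ioc_subset_Icc_self)
    (tendsto_atTop_add_const_left _ a tendsto_natCast_atTop_atTop)
    (Eventually.of_forall fun n => ?_)
  have han : a ≤ a + n := le_add_of_nonneg_right n.cast_nonneg
  calc ∫ x in a..a + n, ‖f x‖ = ∫ x in a..a + n, f x := by
        refine integral_congr fun x hx => Real.norm_of_nonneg (hf0 x ?_)
        exact (Set.uIcc_of_le han ▸ hx).1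
    _ ≤ C := hC _ han

noncomputable def errorEnergy (κ : ℝ) (ε : ℝ → ℝ) (t : ℝ) : ℝ :=
  (ε t ^ 2 + κ * (∫ s in (0:ℝ)..t, ε s) ^ 2) / 2

section errorEnergy

variable {κ : ℝ} {ε : ℝ → ℝ}

@[simp]
theorem errorEnergy_zero : errorEnergy κ ε 0 = ε 0 ^ 2 / 2 := by
  simp [errorEnergy]

theorem errorEnergy_nonneg (hκ : 0 ≤ κ) (t : ℝ) : 0 ≤ errorEnergy κ ε t := by
  unfold errorEnergy
  positivity

theorem hasDerivAt_errorEnergy (hεc : Continuous ε) {c t : ℝ}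
    (hε : HasDerivAt ε (-c * ε t - κ * ∫ s in (0:ℝ)..t, ε s) t) :
    HasDerivAt (errorEnergy κ ε) (-c * ε t ^ 2) t := by
  have hI := (hεc.integral_hasStrictDerivAt 0 t).hasDerivAt
  refine (((hε.pow 2).add ((hI.pow 2).const_mul κ)).div_const 2).congr_deriv ?_
  ring

theorem mul_integral_sq_le_errorEnergy_sub {ξ : ℝ → ℝ} {a T : ℝ} (hξ : ∀ x, a ≤ ξ x)
    (hεc : Continuous ε)
    (hdyn : ∀ t, 0 ≤ t → HasDerivAt ε (-(ξ (ε t)) * ε t - κ * ∫ s in (0:ℝ)..t, ε s) t)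
    (hT : 0 ≤ T) :
    a * ∫ s in (0:ℝ)..T, ε s ^ 2 ≤ errorEnergy κ ε 0 - errorEnergy κ ε T := by
  have hy : ∀ t ∈ Set.Icc 0 T,
      HasDerivAt (-errorEnergy κ ε) (ξ (ε t) * ε t ^ 2) t := fun t ht =>
    (hasDerivAt_errorEnergy hεc (hdyn t ht.1)).neg.congr_deriv (by ring)
  have h := integral_le_sub_of_hasDeriv_right_of_le (φ := fun s => a * ε s ^ 2) hT
    (fun t ht => (hy t ht).continuousAt.continuousWithinAt)
    (fun t ht => (hy t (Set.Ioo_subset_Icc_self ht)).hasDerivWithinAt)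
    ((hεc.pow 2).const_mul a).integrableOn_Icc
    (fun t _ => mul_le_mul_of_nonneg_right (hξ (ε t)) (sq_nonneg (ε t)))
  rw [intervalIntegral.integral_const_mul, Pi.neg_apply, Pi.neg_apply] at h
  linarith

end errorEnergy

/-- **Square-integrability of the AZTND error signal**: if `ξ ≥ a > 0`,
`κ > 0`, and `ε` solves `ε'(t) = -ξ(ε(t))·ε(t) - κ·∫₀ᵗ ε(s) ds` on `[0, ∞)`,
then `∫₀ᵀ ε(s)² ds ≤ ε(0)²/(2a)` for every `T ≥ 0`, and `s ↦ ε(s)²` is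
integrable on `[0, ∞)`. -/
theorem aztnd_error_square_integrable
    (a : ℝ) (ha : 0 < a)
    (ξ : ℝ → ℝ) (hξ : ∀ x : ℝ, a ≤ ξ x) (κ : ℝ) (hκ : 0 < κ)
    (ε : ℝ → ℝ) (hεc : Continuous ε)
    (hdyn : ∀ t : ℝ, 0 ≤ t →
      HasDerivAt ε (-(ξ (ε t)) * ε t - κ * ∫ s in (0:ℝ)..t, ε s) t) :
    (∀ T : ℝ, 0 ≤ T → (∫ s in (0:ℝ)..T, (ε s) ^ 2) ≤ (ε 0) ^ 2 / (2 * a)) ∧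
    IntegrableOn (fun s : ℝ => (ε s) ^ 2) (Set.Ici (0:ℝ)) := by
  have hbound : ∀ T : ℝ, 0 ≤ T → ∫ s in (0:ℝ)..T, ε s ^ 2 ≤ ε 0 ^ 2 / (2 * a) := by
    intro T hT
    have hdiss := mul_integral_sq_le_errorEnergy_sub hξ hεc hdyn hT
    rw [errorEnergy_zero] at hdiss
    rw [le_div_iff₀' (by positivity)]
    linarith [errorEnergy_nonneg hκ.le (ε := ε) T]
  exact ⟨hbound, integrableOn_Ici_of_intervalIntegral_le (hεc.pow 2).locallyIntegrable
    (fun x _ => sq_nonneg (ε x)) hbound⟩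
end

section
/- Let a > 0, let ξ : ℝ → ℝ be continuous with ξ(x) ≥ a for all x, let κ > 0 be a constant, and suppose ε : ℝ → ℝ is differentiable on [0,∞), continuous, and satisfies ε'(t) = -ξ(ε(t))·ε(t) - κ·∫₀ᵗ ε(s) ds for all t ≥ 0. Then there exists a constant C ≥ 0 such that |ε'(t)| ≤ C for all t ≥ 0; one may take C = (sup{ξ(x) : |x| ≤ |ε(0)|})·|ε(0)| + √κ·|ε(0)|. -/
/-!
Along a solution, the energy `ε² + κ (∫₀ᵗ ε)²` has derivative `-2 ξ(ε) ε² ≤ 0`, so it never exceeds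
its initial value `ε(0)²`. This confines `ε(t)` to `[-|ε(0)|, |ε(0)|]`, where `ξ` is bounded by the
supremum `M` of the compact image, and bounds `κ |∫₀ᵗ ε|` by `√κ |ε(0)|`; the equation then gives
`|ε'(t)| ≤ M |ε(0)| + √κ |ε(0)|`.
-/

section Energy

variable {ε ε' g : ℝ → ℝ} {κ : ℝ}

theorem antitoneOn_sq_add_mul_sq_integral (hεc : Continuous ε)
    (hd : ∀ t, 0 ≤ t → HasDerivAt ε (ε' t) t) (hg : ∀ t, 0 ≤ t → 0 ≤ g t)
    (hdyn : ∀ t, 0 ≤ t → ε' t = -g t * ε t - κ * ∫ s in (0 : ℝ)..t, ε s) :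
    AntitoneOn (fun t => ε t ^ 2 + κ * (∫ s in (0 : ℝ)..t, ε s) ^ 2) (Set.Ici 0) := by
  set I : ℝ → ℝ := fun t => ∫ s in (0 : ℝ)..t, ε s
  have hI : ∀ t, HasDerivAt I (ε t) t := fun t => (hεc.integral_hasStrictDerivAt 0 t).hasDerivAt
  have henergy : ∀ t, 0 ≤ t →
      HasDerivAt (fun t => ε t ^ 2 + κ * I t ^ 2) (-2 * g t * ε t ^ 2) t := fun t ht =>
    (((hd t ht).pow 2).add (((hI t).pow 2).const_mul κ)).congr_deriv (by rw [hdyn t ht]; ring)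
  refine antitoneOn_of_hasDerivWithinAt_nonpos (convex_Ici 0) ?_
    (fun t ht => (henergy t (interior_subset ht)).hasDerivWithinAt) fun t ht => ?_
  · exact ((hεc.pow 2).add (continuous_const.mul
      ((continuous_iff_continuousAt.mpr fun t => (hI t).continuousAt).pow 2))).continuousOn
  · have := hg t (interior_subset ht)
    nlinarith [sq_nonneg (ε t)]

theorem sq_add_mul_sq_integral_le (hεc : Continuous ε)
    (hd : ∀ t, 0 ≤ t → HasDerivAt ε (ε' t) t) (hg : ∀ t, 0 ≤ t → 0 ≤ g t)
    (hdyn : ∀ t, 0 ≤ t → ε' t = -g t * ε t - κ * ∫ s in (0 : ℝ)..t, ε s) {t : ℝ} (ht : 0 ≤ t) :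
    ε t ^ 2 + κ * (∫ s in (0 : ℝ)..t, ε s) ^ 2 ≤ ε 0 ^ 2 := by
  simpa using antitoneOn_sq_add_mul_sq_integral hεc hd hg hdyn Set.self_mem_Ici ht ht

end Energy

section SumOfSquares

variable {x y z κ : ℝ}

theorem abs_le_abs_of_sq_add_mul_sq_le (hκ : 0 ≤ κ) (h : x ^ 2 + κ * y ^ 2 ≤ z ^ 2) :
    |x| ≤ |z| :=
  sq_le_sq.mp (by nlinarith [mul_nonneg hκ (sq_nonneg y)])

theorem mul_abs_le_sqrt_mul_abs_of_sq_add_mul_sq_le (hκ : 0 ≤ κ)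
    (h : x ^ 2 + κ * y ^ 2 ≤ z ^ 2) : κ * |y| ≤ √κ * |z| := by
  have hy : |√κ * y| ≤ |z| := by
    refine sq_le_sq.mp ?_
    rw [mul_pow, Real.sq_sqrt hκ]
    nlinarith [sq_nonneg x]
  calc κ * |y| = √κ * |√κ * y| := by
        rw [abs_mul, abs_of_nonneg (Real.sqrt_nonneg κ), ← mul_assoc, Real.mul_self_sqrt hκ]
    _ ≤ √κ * |z| := mul_le_mul_of_nonneg_left hy (Real.sqrt_nonneg κ)

end SumOfSquares

/-- **Uniform bound on the AZTND error derivative**: if `ξ` is continuous with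
`ξ ≥ a > 0`, `κ > 0`, and `ε` solves `ε'(t) = -ξ(ε(t))·ε(t) - κ·∫₀ᵗ ε(s) ds`
on `[0, ∞)`, then the derivative `ε'` is uniformly bounded on `[0, ∞)`; one may
take the bound `C = (sup{ξ(x) : |x| ≤ |ε(0)|})·|ε(0)| + √κ·|ε(0)|`. -/
theorem aztnd_deriv_bounded
    (a : ℝ) (ha : 0 < a)
    (ξ : ℝ → ℝ) (hξc : Continuous ξ) (hξ : ∀ x : ℝ, a ≤ ξ x)
    (κ : ℝ) (hκ : 0 < κ)
    (ε ε' : ℝ → ℝ) (hεc : Continuous ε)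
    (hd : ∀ t : ℝ, 0 ≤ t → HasDerivAt ε (ε' t) t)
    (hdyn : ∀ t : ℝ, 0 ≤ t →
      ε' t = -(ξ (ε t)) * ε t - κ * ∫ s in (0:ℝ)..t, ε s) :
    ∃ C : ℝ, 0 ≤ C ∧
      C = sSup (ξ '' Set.Icc (-|ε 0|) |ε 0|) * |ε 0| + Real.sqrt κ * |ε 0| ∧
      ∀ t : ℝ, 0 ≤ t → |ε' t| ≤ C := by
  have hξ0 : ∀ x, 0 ≤ ξ x := fun x => ha.le.trans (hξ x)
  have henergy : ∀ t, 0 ≤ t → ε t ^ 2 + κ * (∫ s in (0 : ℝ)..t, ε s) ^ 2 ≤ ε 0 ^ 2 :=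
    fun t => sq_add_mul_sq_integral_le hεc hd (fun t _ => hξ0 (ε t)) hdyn
  set M := sSup (ξ '' Set.Icc (-|ε 0|) |ε 0|)
  have hξM : ∀ x, |x| ≤ |ε 0| → ξ x ≤ M := fun x hx =>
    hξc.continuousOn.le_sSup_image_Icc (abs_le.mp hx)
  refine ⟨M * |ε 0| + √κ * |ε 0|, ?_, rfl, fun t ht => ?_⟩
  · have hM : 0 ≤ M := (hξ0 0).trans (hξM 0 (by simp))
    positivity
  have hε := abs_le_abs_of_sq_add_mul_sq_le hκ.le (henergy t ht)
  rw [hdyn t ht]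
  calc |-ξ (ε t) * ε t - κ * ∫ s in (0 : ℝ)..t, ε s|
      ≤ ξ (ε t) * |ε t| + κ * |∫ s in (0 : ℝ)..t, ε s| := by
        refine (abs_sub _ _).trans_eq ?_
        rw [abs_mul, abs_mul, abs_neg, abs_of_nonneg (hξ0 _), abs_of_pos hκ]
    _ ≤ M * |ε 0| + √κ * |ε 0| :=
        add_le_add (mul_le_mul (hξM _ hε) hε (abs_nonneg _) ((hξ0 _).trans (hξM _ hε)))
          (mul_abs_le_sqrt_mul_abs_of_sq_add_mul_sq_le hκ.le (henergy t ht))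
end

section
/- Let ξ > 0 and κ > 0 be real constants and ϑ ∈ ℝ a constant. Suppose ε : ℝ → ℝ is differentiable on [0,∞), continuous, and satisfies the noise-perturbed error dynamics ε'(t) = -ξ·ε(t) - κ·∫₀ᵗ ε(s) ds + ϑ for all t ≥ 0. Then ε(t) tends to 0 as t → ∞. -/
/-!
Differentiating the dynamics kills the constant `ϑ`: `ε` solves the damped oscillator
`x'' + ξ x' + κ x = 0`. Over `ℂ` the operator factors as
`(d/dt - r₁)(d/dt - r₂)` where, by Vieta (`r₁ + r₂ = -ξ`, `r₁ r₂ = κ`), both roots have negative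
real part. Hence `u = ε' - r₁ ε` is `u(0) e^{r₂ t}`, and variation of constants for
`ε' = r₁ ε + u(0) e^{r₂ t}` with `Re r₂ ≤ Re r₁` gives `|ε(t)| ≤ e^{Re r₁ t} (|ε(0)| + |u(0)| t) → 0`.
-/

open MeasureTheory intervalIntegral Filter

theorem eq_of_hasDerivAt_zero_of_nonneg {E : Type*} [NormedAddCommGroup E] [NormedSpace ℝ E]
    {f : ℝ → E} (hf : ∀ t, 0 ≤ t → HasDerivAt f 0 t) {t : ℝ} (ht : 0 ≤ t) : f t = f 0 :=
  constant_of_has_deriv_right_zero (fun x hx => (hf x hx.1).continuousAt.continuousWithinAt)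
    (fun x hx => (hf x hx.1).hasDerivWithinAt) t ⟨ht, le_rfl⟩

theorem tendsto_exp_mul_mul_add_atTop_nhds_zero {σ : ℝ} (hσ : σ < 0) (A B : ℝ) :
    Tendsto (fun t => Real.exp (σ * t) * (A + B * t)) atTop (nhds 0) := by
  have h0 := tendsto_rpow_mul_exp_neg_mul_atTop_nhds_zero 0 (-σ) (neg_pos.2 hσ)
  have h1 := tendsto_rpow_mul_exp_neg_mul_atTop_nhds_zero 1 (-σ) (neg_pos.2 hσ)
  convert (h0.const_mul A).add (h1.const_mul B) using 1
  · funext t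
    simp only [Real.rpow_zero, Real.rpow_one, neg_neg]
    ring
  · simp

section Complex

open Complex

theorem exists_add_eq_mul_eq_re_le (p q : ℂ) :
    ∃ r₁ r₂ : ℂ, r₁ + r₂ = p ∧ r₁ * r₂ = q ∧ r₂.re ≤ r₁.re := by
  obtain ⟨s, hs⟩ := IsAlgClosed.exists_eq_mul_self (p ^ 2 - 4 * q)
  rcases le_total ((p - s) / 2).re ((p + s) / 2).re with h | h
  · exact ⟨(p + s) / 2, (p - s) / 2, by ring, by linear_combination hs / 4, h⟩
  · exact ⟨(p - s) / 2, (p + s) / 2, by ring, by linear_combination hs / 4, h⟩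

theorem re_neg_of_add_eq_of_mul_eq {r₁ r₂ : ℂ} {ξ κ : ℝ} (hξ : 0 < ξ) (hκ : 0 < κ)
    (hsum : r₁ + r₂ = -ξ) (hprod : r₁ * r₂ = κ) : r₁.re < 0 := by
  have hre := congrArg re hsum
  have him := congrArg im hsum
  have hre' := congrArg re hprod
  have him' := congrArg im hprod
  simp only [add_re, add_im, mul_re, mul_im, neg_re, neg_im, ofReal_re, ofReal_im, neg_zero]
    at hre him hre' him'
  have hconj : r₂.im = -r₁.im := by linarith
  rw [hconj] at hre' him'
  -- either both roots are real (same sign, negative sum) or they are conjugate (`re = -ξ/2`)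
  rcases mul_eq_zero.1 (by linear_combination him' : r₁.im * (r₂.re - r₁.re) = 0) with h | h
  · rw [h] at hre'
    nlinarith
  · linarith

theorem hasDerivAt_cexp_const_mul (c : ℂ) (t : ℝ) :
    HasDerivAt (fun s : ℝ => cexp (c * s)) (c * cexp (c * t)) t := by
  simpa [mul_comm] using ((hasDerivAt_id (t : ℂ)).const_mul c).cexp.comp_ofReal

theorem eq_cexp_mul_add_integral_of_hasDerivAt {f g : ℝ → ℂ} {a : ℂ} (hg : Continuous g)
    (hf : ∀ t, 0 ≤ t → HasDerivAt f (a * f t + g t) t) {t : ℝ} (ht : 0 ≤ t) :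
    f t = cexp (a * t) * (f 0 + ∫ s in (0 : ℝ)..t, cexp (-a * s) * g s) := by
  have hint : Continuous fun s : ℝ => cexp (-a * s) * g s := by fun_prop
  have hconst : ∀ s : ℝ, 0 ≤ s → HasDerivAt
      (fun s : ℝ => cexp (-a * s) * f s - ∫ x in (0 : ℝ)..s, cexp (-a * x) * g x) 0 s := by
    intro s hs
    refine (((hasDerivAt_cexp_const_mul (-a) s).mul (hf s hs)).sub
      (hint.integral_hasStrictDerivAt 0 s).hasDerivAt).congr_deriv ?_
    ring
  have h := eq_of_hasDerivAt_zero_of_nonneg hconst ht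
  simp only [ofReal_zero, mul_zero, exp_zero, one_mul, integral_same, sub_zero] at h
  rw [← h, sub_add_cancel, ← mul_assoc, ← exp_add]
  simp

theorem norm_integral_cexp_le {a b : ℂ} (hab : b.re ≤ a.re) {t : ℝ} (ht : 0 ≤ t) :
    ‖∫ s in (0 : ℝ)..t, cexp (-a * s) * cexp (b * s)‖ ≤ t := by
  have := norm_integral_le_of_norm_le_const (C := 1)
    (f := fun s : ℝ => cexp (-a * s) * cexp (b * s)) (a := 0) (b := t) fun s hs => by
      rw [Set.uIoc_of_le ht] at hs
      rw [← exp_add, norm_exp, Real.exp_le_one_iff]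
      simp only [add_re, mul_re, neg_re, ofReal_re, neg_im, ofReal_im, mul_zero, sub_zero]
      nlinarith [hs.1]
  simpa [abs_of_nonneg ht] using this

theorem tendsto_zero_of_hasDerivAt_eq_mul_add_cexp {f : ℝ → ℂ} {a b c : ℂ} (ha : a.re < 0)
    (hab : b.re ≤ a.re) (hf : ∀ t, 0 ≤ t → HasDerivAt f (a * f t + c * cexp (b * t)) t) :
    Tendsto f atTop (nhds 0) := by
  have hbound : ∀ t, 0 ≤ t → ‖f t‖ ≤ Real.exp (a.re * t) * (‖f 0‖ + ‖c‖ * t) := by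
    intro t ht
    rw [eq_cexp_mul_add_integral_of_hasDerivAt (by fun_prop) hf ht, norm_mul, norm_exp]
    simp only [mul_re, ofReal_re, ofReal_im, mul_zero, sub_zero]
    gcongr
    calc ‖f 0 + ∫ s in (0 : ℝ)..t, cexp (-a * s) * (c * cexp (b * s))‖
        ≤ ‖f 0‖ + ‖c‖ * ‖∫ s in (0 : ℝ)..t, cexp (-a * s) * cexp (b * s)‖ := by
          simp_rw [mul_left_comm _ c, intervalIntegral.integral_const_mul]
          exact (norm_add_le _ _).trans_eq (by rw [norm_mul])
      _ ≤ ‖f 0‖ + ‖c‖ * t := by gcongr; exact norm_integral_cexp_le hab ht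
  refine squeeze_zero_norm' ?_ (tendsto_exp_mul_mul_add_atTop_nhds_zero ha ‖f 0‖ ‖c‖)
  filter_upwards [eventually_ge_atTop 0] with t ht using hbound t ht

theorem tendsto_zero_of_damped_oscillator {ξ κ : ℝ} (hξ : 0 < ξ) (hκ : 0 < κ) {x v : ℝ → ℝ}
    (hx : ∀ t, 0 ≤ t → HasDerivAt x (v t) t)
    (hv : ∀ t, 0 ≤ t → HasDerivAt v (-ξ * v t - κ * x t) t) :
    Tendsto x atTop (nhds 0) := by
  obtain ⟨r₁, r₂, hsum, hprod, hle⟩ := exists_add_eq_mul_eq_re_le (-ξ : ℂ) κ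
  set X : ℝ → ℂ := fun t => x t
  set V : ℝ → ℂ := fun t => v t
  have hX : ∀ t, 0 ≤ t → HasDerivAt X (V t) t := fun t ht => (hx t ht).ofReal_comp
  have hV : ∀ t, 0 ≤ t → HasDerivAt V ((r₁ + r₂) * V t - r₁ * r₂ * X t) t := fun t ht => by
    rw [hsum, hprod]
    exact (hv t ht).ofReal_comp.congr_deriv (by push_cast; ring)
  set U : ℝ → ℂ := fun t => V t - r₁ * X t
  have hU : ∀ t, 0 ≤ t → HasDerivAt U (r₂ * U t + 0) t := fun t ht =>
    ((hV t ht).sub ((hX t ht).const_mul r₁)).congr_deriv (by ring)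
  have hUexp : ∀ t, 0 ≤ t → U t = U 0 * cexp (r₂ * t) := fun t ht => by
    simpa [mul_comm] using eq_cexp_mul_add_integral_of_hasDerivAt continuous_const hU ht
  have hX' : ∀ t, 0 ≤ t → HasDerivAt X (r₁ * X t + U 0 * cexp (r₂ * t)) t := fun t ht =>
    (hX t ht).congr_deriv (by rw [← hUexp t ht]; ring)
  have hXlim := tendsto_zero_of_hasDerivAt_eq_mul_add_cexp
    (re_neg_of_add_eq_of_mul_eq hξ hκ hsum hprod) hle hX'
  exact tendsto_ofReal_iff.mp (by simpa using hXlim)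

end Complex

/-- **Constant-noise rejection**: for constant coefficients `ξ > 0`, `κ > 0`
and a constant noise `ϑ`, any solution of the perturbed error dynamics
`ε'(t) = -ξ·ε(t) - κ·∫₀ᵗ ε(s) ds + ϑ` on `[0, ∞)` still converges to zero:
the integral feedback term rejects constant disturbances. -/
theorem aztnd_constant_noise_rejection
    (ξ κ ϑ : ℝ) (hξ : 0 < ξ) (hκ : 0 < κ)
    (ε : ℝ → ℝ) (hεc : Continuous ε)
    (hdyn : ∀ t : ℝ, 0 ≤ t →
      HasDerivAt ε (-ξ * ε t - κ * (∫ s in (0:ℝ)..t, ε s) + ϑ) t) :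
    Tendsto ε atTop (nhds 0) :=
  tendsto_zero_of_damped_oscillator hξ hκ hdyn fun t ht =>
    (((hdyn t ht).const_mul (-ξ)).sub
      ((hεc.integral_hasStrictDerivAt 0 t).hasDerivAt.const_mul κ)).add_const ϑ
end
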